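/- Let G be a graph, t₀, r, m positive integers, and B ⊆ V(G) with |B| ≥ t₀²+t₀+m−2 such that all vertices of B are pairwise at distance at most r in G. Suppose there is a flip F = (P₁,P₂) such that G contains no K_{t₀,t₀} subgraph with one side in P₁ and the other in P₂, and B is r-independent in G ⊕ F. Then there exist S ⊆ V(G) with |S| ≤ t₀²+t₀−2 and B' ⊆ B with |B'| ≥ m such that B' is r-independent in G \ S. -/

import Mathlib

/-- The flip of a graph `G` on a pair of vertex sets `(A, B)`: the adjacency between
every pair of distinct vertices `u ∈ A`, `v ∈ B` is complemented. -/
def gflip {V : Type*} (G : SimpleGraph V) (A B : Set V) : SimpleGraph V where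
  Adj u v := u ≠ v ∧ Xor' (G.Adj u v) ((u ∈ A ∧ v ∈ B) ∨ (u ∈ B ∧ v ∈ A))
  symm := by
    constructor
    intro u v hx
    obtain ⟨h, hx⟩ := hx
    refine ⟨h.symm, ?_⟩
    have hGA : G.Adj v u ↔ G.Adj u v := ⟨fun h => h.symm, fun h => h.symm⟩
    unfold Xor' Xor at *
    tauto
  loopless := by constructor; intro v hx; exact hx.1 rfl

/-- `B` is `r`-independent in `H`. -/
def RIndep {V : Type*} (H : SimpleGraph V) (r : ℕ) (B : Set V) : Prop :=
  ∀ u ∈ B, ∀ v ∈ B, u ≠ v → ∀ p : H.Walk u v, r < p.length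

/-- `B` is `r`-independent in `G \ S`: every walk in `G` between two distinct vertices of
`B` whose support avoids `S` has length strictly greater than `r`. -/
def RIndepAvoid {V : Type*} (G : SimpleGraph V) (r : ℕ) (S B : Set V) : Prop :=
  ∀ u ∈ B, ∀ v ∈ B, u ≠ v → ∀ p : G.Walk u v,
    (∀ w ∈ p.support, w ∉ S) → r < p.length

/-!
A `G`-walk meeting no flipped pair is also a walk of `G ⊕ F`, so if one side `Pᵢ` of the flip is
small, deleting it leaves `B \ Pᵢ` `r`-independent. Otherwise both sides are large, and we find a
`K_{t₀,t₀}`. As `B` is `r`-close in `G` but `r`-independent in `G ⊕ F`, a short `G`-walk between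
two vertices of `B` uses a flipped pair, so one of its ends is within about `r / 2` of `P₁ ∪ P₂`
in `G ⊕ F`. Counting with `c = ⌊r / 2⌋` gives `t₀` vertices of `B` within `α` of `P₁` and `t₀`
others within `γ` of `P₂`, where `α + γ < r`. Their nearest points in `P₁` and `P₂` are distinct,
and a non-adjacent pair among them would be an edge of `G ⊕ F` joining two vertices of `B` at
distance at most `r`; so they span a `K_{t₀,t₀}` of `G`. The delicate count, that few vertices of
`B` are far from `P₂`, rests on the fact that a vertex of `P₁` close to such a vertex is complete
to `P₂` in `G`, and fewer than `t₀` vertices of `P₁` can be.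
-/

open SimpleGraph Finset

section

variable {V : Type*} {G : SimpleGraph V}

section Flip

variable {A A' : Set V} {x y : V}

def Crosses (A A' : Set V) (x y : V) : Prop := (x ∈ A ∧ y ∈ A') ∨ (x ∈ A' ∧ y ∈ A)

lemma gflip_comm (G : SimpleGraph V) (A A' : Set V) : gflip G A A' = gflip G A' A := by
  ext x y
  simp only [gflip]
  rw [or_comm (a := x ∈ A ∧ y ∈ A')]

lemma gflip_adj_of_adj (h : G.Adj x y) (hc : ¬Crosses A A' x y) : (gflip G A A').Adj x y :=
  ⟨h.ne, Or.inl ⟨h, hc⟩⟩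

lemma gflip_adj_of_not_adj (hne : x ≠ y) (h : ¬G.Adj x y) (hx : x ∈ A) (hy : y ∈ A') :
    (gflip G A A').Adj x y :=
  ⟨hne, Or.inr ⟨Or.inl ⟨hx, hy⟩, h⟩⟩

lemma exists_gflip_walk_or_crossing {u v : V} (p : G.Walk u v) :
    (∃ q : (gflip G A A').Walk u v, q.length = p.length) ∨
      ∃ (x x' : V) (q : (gflip G A A').Walk u x) (p' : G.Walk x' v),
        Crosses A A' x x' ∧ q.length + 1 + p'.length = p.length := by
  induction p with
  | nil => exact Or.inl ⟨.nil, rfl⟩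
  | @cons a b c h p ih =>
    by_cases hc : Crosses A A' a b
    · exact Or.inr ⟨a, b, .nil, p, hc, by simp; omega⟩
    · have hab := gflip_adj_of_adj h hc
      rcases ih with ⟨q, hq⟩ | ⟨x, x', q, p', hx, hlen⟩
      · exact Or.inl ⟨.cons hab q, by simp [hq]⟩
      · exact Or.inr ⟨x, x', .cons hab q, p', hx, by simp; omega⟩

/-- Cutting a `G`-walk at its first and at its last flipped pair. -/
lemma exists_gflip_walks_to_crossings {u v : V} (p : G.Walk u v) :
    (∃ q : (gflip G A A').Walk u v, q.length = p.length) ∨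
      ∃ (x y : V) (qu : (gflip G A A').Walk u x) (qv : (gflip G A A').Walk v y),
        (Crosses A A' x y ∧ qu.length + qv.length + 1 ≤ p.length) ∨
        ((x ∈ A ∨ x ∈ A') ∧ (y ∈ A ∨ y ∈ A') ∧ qu.length + qv.length + 2 ≤ p.length) := by
  rcases exists_gflip_walk_or_crossing p with hp | ⟨x, x', qu, p', hx, hlen⟩
  · exact Or.inl hp
  right
  rcases exists_gflip_walk_or_crossing (A := A) (A' := A') p'.reverse with
    ⟨qv, hqv⟩ | ⟨y, y', qv, p'', hy, hlen'⟩
  · refine ⟨x, x', qu, qv, Or.inl ⟨hx, ?_⟩⟩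
    simp only [hqv, Walk.length_reverse]
    omega
  · refine ⟨x, y, qu, qv, Or.inr ⟨hx.imp And.left And.left, hy.imp And.left And.left, ?_⟩⟩
    rw [Walk.length_reverse] at hlen'
    omega

end Flip

lemma RIndep.eq_of_walk {H : SimpleGraph V} {r : ℕ} {X : Set V} (h : RIndep H r X) {u v : V}
    (hu : u ∈ X) (hv : v ∈ X) (p : H.Walk u v) (hp : p.length ≤ r) : u = v := by
  by_contra hne
  exact (h u hu v hv hne p).not_ge hp

lemma RIndep.eq_of_walks {H : SimpleGraph V} {r : ℕ} {X : Set V} (h : RIndep H r X)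
    {u v x y : V} (hu : u ∈ X) (hv : v ∈ X) (q : H.Walk u x) (e : H.Walk x y) (q' : H.Walk v y)
    (hl : q.length + e.length + q'.length ≤ r) : u = v :=
  h.eq_of_walk hu hv (q.append (e.append q'.reverse)) (by simpa [add_assoc] using hl)

lemma rIndepAvoid_of_covers {A A' S X : Set V} {r : ℕ} (hind : RIndep (gflip G A A') r X)
    (hS : ∀ x y, Crosses A A' x y → x ∈ S ∨ y ∈ S) : RIndepAvoid G r S X := by
  intro u hu v hv huv p hp
  have hedges : ∀ e ∈ p.edges, e ∈ (gflip G A A').edgeSet := by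
    intro e he
    induction e using Sym2.ind with
    | _ x y =>
      refine gflip_adj_of_adj (p.adj_of_mem_edges he) fun hc => ?_
      exact (hS x y hc).elim (hp x (p.fst_mem_support_of_mem_edges he))
        (hp y (p.snd_mem_support_of_mem_edges he))
  simpa using hind u hu v hv huv (p.transfer _ hedges)

lemma RIndepAvoid.mono {r : ℕ} {S X Y : Set V} (h : RIndepAvoid G r S X) (hYX : Y ⊆ X) :
    RIndepAvoid G r S Y :=
  fun u hu v hv => h u (hYX hu) v (hYX hv)

lemma exists_rIndepAvoid_of_covers [DecidableEq V] {A A' : Set V} {r : ℕ} {S B : Finset V}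
    (hind : RIndep (gflip G A A') r ↑B) (hS : ∀ x y, Crosses A A' x y → x ∈ S ∨ y ∈ S) :
    ∃ B' ⊆ B, #B - #S ≤ #B' ∧ Disjoint B' S ∧ RIndepAvoid G r ↑S ↑B' :=
  ⟨B \ S, sdiff_subset, le_card_sdiff S B, sdiff_disjoint,
    (rIndepAvoid_of_covers hind hS).mono (by simp)⟩

def HasBiclique (G : SimpleGraph V) (P₁ P₂ : Finset V) (t : ℕ) : Prop :=
  ∃ X Y : Finset V, X ⊆ P₁ ∧ Y ⊆ P₂ ∧ Disjoint X Y ∧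
    X.card = t ∧ Y.card = t ∧ ∀ x ∈ X, ∀ y ∈ Y, G.Adj x y

lemma HasBiclique.symm {P₁ P₂ : Finset V} {t : ℕ} (h : HasBiclique G P₁ P₂ t) :
    HasBiclique G P₂ P₁ t := by
  obtain ⟨X, Y, hX, hY, hXY, hXc, hYc, hadj⟩ := h
  exact ⟨Y, X, hY, hX, hXY.symm, hYc, hXc, fun y hy x hx => (hadj x hx y hy).symm⟩

/-- The bound is strict so that "within `c - 1`" is `DistLT H P c`, with no truncated subtraction
at `c = 0`. -/
def DistLT (H : SimpleGraph V) (P : Finset V) (n : ℕ) (b : V) : Prop :=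
  ∃ z ∈ P, ∃ q : H.Walk b z, q.length < n

lemma le_length_of_not_distLT {H : SimpleGraph V} {P : Finset V} {n : ℕ} {b z : V}
    (h : ¬DistLT H P n b) (hz : z ∈ P) (q : H.Walk b z) : n ≤ q.length :=
  not_lt.mp fun hq => h ⟨z, hz, q, hq⟩

section Counting

open scoped Classical

variable {P₁ P₂ B : Finset V} {r t : ℕ}

/-- A short `G`-walk between two such vertices would have to meet a flipped pair. -/
lemma card_filter_far_le_one (hind : RIndep (gflip G P₁ P₂) r B)
    (hclose : ∀ u ∈ B, ∀ v ∈ B, u ≠ v → ∃ p : G.Walk u v, p.length ≤ r) {n₁ n₂ : ℕ}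
    (h₁₂ : r ≤ n₁ + n₂) (h₁ : r ≤ 2 * n₁ + 1) (h₂ : r ≤ 2 * n₂ + 1) :
    #(B.filter fun b => ¬DistLT (gflip G P₁ P₂) P₁ n₁ b ∧ ¬DistLT (gflip G P₁ P₂) P₂ n₂ b) ≤ 1 := by
  refine card_le_one.mpr fun u hu v hv => by_contra fun hne => ?_
  simp only [mem_filter] at hu hv
  obtain ⟨p, hp⟩ := hclose u hu.1 v hv.1 hne
  have far {b x : V}
      (hb : ¬DistLT (gflip G P₁ P₂) P₁ n₁ b ∧ ¬DistLT (gflip G P₁ P₂) P₂ n₂ b)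
      (hx : x ∈ P₁ ∨ x ∈ P₂) (q : (gflip G P₁ P₂).Walk b x) : min n₁ n₂ ≤ q.length := by
    rcases hx with hx | hx
    · exact (min_le_left _ _).trans (le_length_of_not_distLT hb.1 hx q)
    · exact (min_le_right _ _).trans (le_length_of_not_distLT hb.2 hx q)
  rcases exists_gflip_walks_to_crossings (A := P₁) (A' := P₂) p with
    ⟨q, hq⟩ | ⟨x, y, qu, qv, ⟨⟨hx, hy⟩ | ⟨hx, hy⟩, hlen⟩ | ⟨hx, hy, hlen⟩⟩
  · exact hne (hind.eq_of_walk hu.1 hv.1 q (hq ▸ hp))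
  · have := le_length_of_not_distLT hu.2.1 hx qu
    have := le_length_of_not_distLT hv.2.2 hy qv
    omega
  · have := le_length_of_not_distLT hu.2.2 hx qu
    have := le_length_of_not_distLT hv.2.1 hy qv
    omega
  · have := far hu.2 hx qu
    have := far hv.2 hy qv
    omega

/-- A non-neighbour `w` of `z` would become a neighbour in the flip, bringing `u` within `n`
of `P₂`. -/
lemma adj_of_not_distLT_succ {u z w : V} {n : ℕ} (hu : ¬DistLT (gflip G P₁ P₂) P₂ (n + 1) u)
    (hz : z ∈ P₁) (q : (gflip G P₁ P₂).Walk u z) (hq : q.length < n) (hw : w ∈ P₂)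
    (hwz : w ≠ z) : G.Adj z w := by
  by_contra h
  exact hu ⟨w, hw, q.concat (gflip_adj_of_not_adj hwz.symm h hz hw), by simp; omega⟩

lemma card_filter_forall_adj_lt (hK : ¬HasBiclique G P₁ P₂ t) (hP₂ : 2 * t ≤ #P₂) :
    #(P₁.filter fun z => ∀ w ∈ P₂, w ≠ z → G.Adj z w) < t := by
  by_contra! hU
  obtain ⟨X, hXU, hX⟩ := exists_subset_card_eq hU
  obtain ⟨Y, hYP, hY⟩ := exists_subset_card_eq ((by have := le_card_sdiff X P₂; omega) :
    t ≤ #(P₂ \ X))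
  refine hK ⟨X, Y, hXU.trans (filter_subset _ _), hYP.trans sdiff_subset,
    disjoint_of_subset_right hYP disjoint_sdiff, hX, hY, fun x hx y hy => ?_⟩
  have hy' := mem_sdiff.mp (hYP hy)
  exact (mem_filter.mp (hXU hx)).2 y hy'.1 (ne_of_mem_of_not_mem hx hy'.2).symm

/-- Nearest points in `P` of the vertices of `A`: two vertices of `A` sharing one would be at
distance at most `r`. -/
lemma exists_injOn_distLT {H : SimpleGraph V} (hind : RIndep H r B) {A P : Finset V} {n : ℕ}
    (hA : A ⊆ B) (hn : 2 * n ≤ r + 2) (h : ∀ b ∈ A, DistLT H P n b) :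
    ∃ f : V → V, Set.InjOn f A ∧ ∀ b ∈ A, f b ∈ P ∧ ∃ q : H.Walk b (f b), q.length < n := by
  choose! f hf using h
  refine ⟨f, fun b hb b' hb' hbb' => ?_, hf⟩
  obtain ⟨q, hq⟩ := (hf b hb).2
  obtain ⟨q', hq'⟩ := (hf b' hb').2
  exact hind.eq_of_walks (hA hb) (hA hb') q (Walk.nil.copy rfl hbb') q' (by simp; omega)

lemma card_filter_not_distLT_le (hK : ¬HasBiclique G P₁ P₂ t) (hP₂ : 2 * t ≤ #P₂)
    (hind : RIndep (gflip G P₁ P₂) r B)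
    (hclose : ∀ u ∈ B, ∀ v ∈ B, u ≠ v → ∃ p : G.Walk u v, p.length ≤ r) {c : ℕ}
    (hc : 2 * c ≤ r) (hc' : r ≤ 2 * c + 1) :
    #(B.filter fun b => ¬DistLT (gflip G P₁ P₂) P₂ (c + 1) b) ≤ t := by
  set Z := B.filter fun b => ¬DistLT (gflip G P₁ P₂) P₂ (c + 1) b
  have hfar : #(Z.filter fun b => ¬DistLT (gflip G P₁ P₂) P₁ c b) ≤ 1 := by
    refine le_trans (card_le_card fun b hb => ?_)
      (card_filter_far_le_one hind hclose (n₁ := c) (n₂ := c + 1) (by omega) hc' (by omega))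
    simp only [Z, mem_filter] at hb ⊢
    exact ⟨hb.1.1, hb.2, hb.1.2⟩
  have hnear : #(Z.filter (DistLT (gflip G P₁ P₂) P₁ c)) ≤
      #(P₁.filter fun z => ∀ w ∈ P₂, w ≠ z → G.Adj z w) := by
    obtain ⟨f, hinj, hf⟩ := exists_injOn_distLT hind (A := Z.filter (DistLT _ P₁ c))
      (fun b hb => (mem_filter.mp (mem_filter.mp hb).1).1) (by omega)
      (fun b hb => (mem_filter.mp hb).2)
    refine card_le_card_of_injOn f (fun b hb => ?_) hinj
    obtain ⟨hfb, q, hq⟩ := hf b hb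
    have hbZ := (mem_filter.mp (mem_filter.mp hb).1).2
    exact mem_filter.mpr ⟨hfb, fun w hw hwz => adj_of_not_distLT_succ hbZ hfb q hq hw hwz⟩
  have := card_filter_forall_adj_lt hK hP₂
  have := card_filter_add_card_filter_not (s := Z) (DistLT (gflip G P₁ P₂) P₁ c)
  omega

/-- Nearest points in `P₁` of `A₁` and in `P₂` of `A₂` span a biclique of `G`: a non-edge between
them would be an edge of the flip, joining a vertex of `A₁` to one of `A₂` within distance `r`. -/
lemma hasBiclique_of_distLT {α γ : ℕ} (hind : RIndep (gflip G P₁ P₂) r B)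
    (hαγ : α + γ ≤ r + 1) (hα : 2 * α ≤ r + 2) (hγ : 2 * γ ≤ r + 2) {A₁ A₂ : Finset V}
    (hA₁ : A₁ ⊆ B) (hA₂ : A₂ ⊆ B) (hA : Disjoint A₁ A₂) (hA₁t : #A₁ = t) (hA₂t : #A₂ = t)
    (h₁ : ∀ b ∈ A₁, DistLT (gflip G P₁ P₂) P₁ α b)
    (h₂ : ∀ b ∈ A₂, DistLT (gflip G P₁ P₂) P₂ γ b) : HasBiclique G P₁ P₂ t := by
  obtain ⟨f₁, hinj₁, hf₁⟩ := exists_injOn_distLT hind hA₁ hα h₁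
  obtain ⟨f₂, hinj₂, hf₂⟩ := exists_injOn_distLT hind hA₂ hγ h₂
  have hne {b b'} (hb : b ∈ A₁) (hb' : b' ∈ A₂) : b ≠ b' :=
    ne_of_mem_of_not_mem hb (disjoint_right.mp hA hb')
  refine ⟨A₁.image f₁, A₂.image f₂, ?_, ?_, disjoint_left.mpr ?_,
    by rwa [card_image_of_injOn hinj₁], by rwa [card_image_of_injOn hinj₂], ?_⟩
  · simpa [image_subset_iff] using fun b hb => (hf₁ b hb).1
  · simpa [image_subset_iff] using fun b hb => (hf₂ b hb).1
  · simp only [mem_image]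
    rintro _ ⟨b, hb, rfl⟩ ⟨b', hb', hbb'⟩
    obtain ⟨q, hq⟩ := (hf₁ b hb).2
    obtain ⟨q', hq'⟩ := (hf₂ b' hb').2
    exact hne hb hb' (hind.eq_of_walks (hA₁ hb) (hA₂ hb') q (Walk.nil.copy rfl hbb'.symm) q'
      (by simp; omega))
  · simp only [mem_image]
    rintro _ ⟨b, hb, rfl⟩ _ ⟨b', hb', rfl⟩
    by_contra hadj
    obtain ⟨q, hq⟩ := (hf₁ b hb).2
    obtain ⟨q', hq'⟩ := (hf₂ b' hb').2
    have hf₁₂ : f₁ b ≠ f₂ b' := fun h => hne hb hb'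
      (hind.eq_of_walks (hA₁ hb) (hA₂ hb') q (Walk.nil.copy rfl h) q' (by simp; omega))
    have e := gflip_adj_of_not_adj hf₁₂ hadj (hf₁ b hb).1 (hf₂ b' hb').1
    exact hne hb hb' (hind.eq_of_walks (hA₁ hb) (hA₂ hb') q e.toWalk q' (by simp; omega))

lemma hasBiclique_of_card_filter_distLT {α γ : ℕ} (hind : RIndep (gflip G P₁ P₂) r B)
    (hαγ : α + γ ≤ r + 1) (hα : 2 * α ≤ r + 2) (hγ : 2 * γ ≤ r + 2)
    (h₁ : t ≤ #(B.filter (DistLT (gflip G P₁ P₂) P₁ α)))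
    (h₂ : 2 * t ≤ #(B.filter (DistLT (gflip G P₁ P₂) P₂ γ))) : HasBiclique G P₁ P₂ t := by
  obtain ⟨A₁, hA₁, hA₁t⟩ := exists_subset_card_eq h₁
  have := le_card_sdiff A₁ (B.filter (DistLT (gflip G P₁ P₂) P₂ γ))
  obtain ⟨A₂, hA₂, hA₂t⟩ := exists_subset_card_eq (by omega :
    t ≤ #(B.filter (DistLT (gflip G P₁ P₂) P₂ γ) \ A₁))
  refine hasBiclique_of_distLT hind hαγ hα hγ (hA₁.trans (filter_subset _ _))
    (hA₂.trans (sdiff_subset.trans (filter_subset _ _))) (disjoint_of_subset_right hA₂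
    disjoint_sdiff) hA₁t hA₂t (fun b hb => (mem_filter.mp (hA₁ hb)).2)
    (fun b hb => (mem_filter.mp (sdiff_subset (hA₂ hb))).2)

/-- With `c = ⌊r / 2⌋`: for odd `r`, use the vertices within `c` of both sides; for even `r`, some
side has `t` vertices within `c - 1`, since at most one vertex is at distance `≥ c` from both. -/
lemma hasBiclique_of_rIndep_gflip (hP₁ : 2 * t ≤ #P₁) (hP₂ : 2 * t ≤ #P₂) (hB : 3 * t ≤ #B)
    (hclose : ∀ u ∈ B, ∀ v ∈ B, u ≠ v → ∃ p : G.Walk u v, p.length ≤ r)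
    (hind : RIndep (gflip G P₁ P₂) r B) : HasBiclique G P₁ P₂ t := by
  by_contra hK
  have hind' : RIndep (gflip G P₂ P₁) r B := gflip_comm G P₁ P₂ ▸ hind
  obtain ⟨c, hr⟩ := Nat.even_or_odd' r
  have hZ₂ := card_filter_not_distLT_le hK hP₂ hind hclose (c := c) (by omega) (by omega)
  have hZ₁ := card_filter_not_distLT_le (mt HasBiclique.symm hK) hP₁ hind' hclose (c := c)
    (by omega) (by omega)
  rw [gflip_comm] at hZ₁
  have := card_filter_add_card_filter_not (s := B) (DistLT (gflip G P₁ P₂) P₁ (c + 1))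
  have := card_filter_add_card_filter_not (s := B) (DistLT (gflip G P₁ P₂) P₂ (c + 1))
  rcases hr with rfl | rfl
  · have hfar := card_filter_far_le_one hind hclose (n₁ := c) (n₂ := c) (by omega)
      (by omega) (by omega)
    have hcover : #B ≤ #(B.filter (DistLT (gflip G P₁ P₂) P₁ c)) +
        #(B.filter (DistLT (gflip G P₁ P₂) P₂ c)) + 1 := by
      refine le_trans (card_le_card fun b hb => ?_) ((card_union_le _ _).trans
        (add_le_add (card_union_le _ _) hfar))
      simp only [mem_union, mem_filter]
      tauto
    by_cases ht : t ≤ #(B.filter (DistLT (gflip G P₁ P₂) P₁ c))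
    · exact hK (hasBiclique_of_card_filter_distLT hind (α := c) (γ := c + 1) (by omega)
        (by omega) (by omega) ht (by omega))
    · refine hK (hasBiclique_of_card_filter_distLT hind' (α := c) (γ := c + 1) (by omega)
        (by omega) (by omega) ?_ ?_).symm <;> rw [gflip_comm] <;> omega
  · exact hK (hasBiclique_of_card_filter_distLT hind (α := c + 1) (γ := c + 1) (by omega)
      (by omega) (by omega) (by omega) (by omega))

end Counting

end

theorem single_flip_to_deletion_general {V : Type*} (G : SimpleGraph V) (t₀ r m : ℕ)
    (ht₀ : 0 < t₀)
    (hbig : 8 * t₀ ≤ t₀ ^ 2 + t₀ - 2)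
    (P₁ P₂ B : Finset V)
    (hKtt : ¬ ∃ X Y : Finset V, X ⊆ P₁ ∧ Y ⊆ P₂ ∧ Disjoint X Y ∧
      X.card = t₀ ∧ Y.card = t₀ ∧ ∀ x ∈ X, ∀ y ∈ Y, G.Adj x y)
    (hB : t₀ ^ 2 + t₀ + m - 2 ≤ B.card)
    (hclose : ∀ u ∈ B, ∀ v ∈ B, u ≠ v → ∃ p : G.Walk u v, p.length ≤ r)
    (hind : RIndep (gflip G ↑P₁ ↑P₂) r ↑B) :
    ∃ S : Finset V, S.card ≤ t₀ ^ 2 + t₀ - 2 ∧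
      ∃ B' ⊆ B, m ≤ B'.card ∧ Disjoint B' S ∧ RIndepAvoid G r ↑S ↑B' := by
  classical
  by_cases h₁ : #P₁ ≤ t₀ ^ 2 + t₀ - 2
  · obtain ⟨B', hB', hcard, hdisj, hS⟩ :=
      exists_rIndepAvoid_of_covers hind fun x y hxy => hxy.imp And.left And.right
    exact ⟨P₁, h₁, B', hB', by omega, hdisj, hS⟩
  by_cases h₂ : #P₂ ≤ t₀ ^ 2 + t₀ - 2
  · obtain ⟨B', hB', hcard, hdisj, hS⟩ :=
      exists_rIndepAvoid_of_covers hind fun x y hxy => hxy.symm.imp And.left And.right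
    exact ⟨P₂, h₂, B', hB', by omega, hdisj, hS⟩
  exact (hKtt (hasBiclique_of_rIndep_gflip (by omega) (by omega) (by omega) hclose hind)).elim

/-- Lemma 6 of the paper: if a single flip `(P₁, P₂)`, containing no `K_{t₀,t₀}` of `G`
with one side in `P₁` and the other in `P₂`, makes a set `B` of at least
`t₀² + t₀ + m - 2` pairwise `r`-close vertices `r`-independent, then there are a set `S`
of at most `t₀² + t₀ - 2` vertices and `B' ⊆ B` with `|B'| ≥ m` such that `B'` is
`r`-independent in `G \ S`. -/
theorem single_flip_to_deletion {V : Type*} (G : SimpleGraph V) (t₀ r m : ℕ)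
    (ht₀ : 0 < t₀) (hr : 0 < r) (hm : 0 < m)
    (hbig : 8 * t₀ ≤ t₀ ^ 2 + t₀ - 2)
    (P₁ P₂ B : Finset V)
    (hKtt : ¬ ∃ X Y : Finset V, X ⊆ P₁ ∧ Y ⊆ P₂ ∧ Disjoint X Y ∧
      X.card = t₀ ∧ Y.card = t₀ ∧ ∀ x ∈ X, ∀ y ∈ Y, G.Adj x y)
    (hB : t₀ ^ 2 + t₀ + m - 2 ≤ B.card)
    (hclose : ∀ u ∈ B, ∀ v ∈ B, u ≠ v → ∃ p : G.Walk u v, p.length ≤ r)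
    (hind : RIndep (gflip G ↑P₁ ↑P₂) r ↑B) :
    ∃ S : Finset V, S.card ≤ t₀ ^ 2 + t₀ - 2 ∧
      ∃ B' ⊆ B, m ≤ B'.card ∧ Disjoint B' S ∧ RIndepAvoid G r ↑S ↑B' :=
  single_flip_to_deletion_general G t₀ r m ht₀ hbig P₁ P₂ B hKtt hB hclose hind
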